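/- Let F ∈ M_n(H) be the diagonal matrix with F_{i,i} = φ(f(i)) and let v_k = P̃^k 𝟙_H be the solution of the hypo-elliptic diffusion. Then the i-th component of F·v_k equals E[φ(δ_0 L)·φ(δ_1 L)⋯φ(δ_k L) | B_0 = i], where δ_0 L = f(B_0) and δ_q L = f(B_q) − f(B_{q-1}); that is, left-multiplying by F prepends the lift of the starting attribute to the random-walk feature expectation. -/

import Mathlib

/-!
Expanding the matrix power, `(P̃ ^ k *ᵥ 𝟙) i` is the sum over walks `i = w₀, w₁, …, w_k` of the
ordered products `P̃_{w₀w₁} ⋯ P̃_{w_{k-1}w_k}`. Each factor is a real transition probability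
times `φ` of an increment, and since real scalars commute with `H` the probabilities collect into
the probability of the walk. Left multiplication by the diagonal matrix `F` multiplies the `i`-th
component on the left by `φ (f i)`.
-/

def degree (n : ℕ) (Adj : Fin n → Fin n → Prop) [DecidableRel Adj] (i : Fin n) : ℕ :=
  (Finset.univ.filter (fun j => Adj i j)).card

open Finset Matrix

theorem Fintype.sum_pi_fin_succ {ι M : Type*} [Fintype ι] [AddCommMonoid M] {k : ℕ}
    (g : (Fin (k + 1) → ι) → M) :
    ∑ w, g w = ∑ j, ∑ w : Fin k → ι, g (Fin.cons j w) := by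
  rw [← (Fin.consEquiv fun _ => ι).sum_comp, Fintype.sum_prod_type]
  rfl

theorem Fintype.sum_ite_apply_zero_eq_sum_cons {ι M : Type*} [Fintype ι] [DecidableEq ι]
    [AddCommMonoid M] {k : ℕ} (i : ι) (g : (Fin (k + 1) → ι) → M) :
    ∑ w : Fin (k + 1) → ι, (if w 0 = i then g w else 0) =
      ∑ w : Fin k → ι, g (Fin.cons i w) := by
  simp_rw [Fintype.sum_pi_fin_succ, Fin.cons_zero, sum_ite_irrel, sum_const_zero,
    sum_ite_eq']

theorem List.prod_ofFn_smul {R A : Type*} [CommSemiring R] [Semiring A] [Algebra R A] {k : ℕ}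
    (c : Fin k → R) (x : Fin k → A) :
    (List.ofFn fun q => c q • x q).prod = (∏ q, c q) • (List.ofFn x).prod := by
  induction k with
  | zero => simp
  | succ k ih =>
    simp only [List.ofFn_succ, List.prod_cons, ih, Fin.prod_univ_succ, smul_mul_smul_comm]

theorem Matrix.pow_mulVec_one_apply {ι R : Type*} [Fintype ι] [DecidableEq ι] [Semiring R]
    (A : Matrix ι ι R) (k : ℕ) (i : ι) :
    (A ^ k *ᵥ fun _ => 1) i = ∑ w : Fin k → ι,
      (List.ofFn fun q : Fin k =>
        A ((Fin.cons i w : Fin (k + 1) → ι) q.castSucc)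
          ((Fin.cons i w : Fin (k + 1) → ι) q.succ)).prod := by
  induction k generalizing i with
  | zero => simp
  | succ k ih =>
    rw [pow_succ', ← mulVec_mulVec, mulVec, dotProduct, Fintype.sum_pi_fin_succ]
    refine sum_congr rfl fun j _ => ?_
    rw [ih, mul_sum]
    refine sum_congr rfl fun w _ => ?_
    simp [List.ofFn_succ]

theorem prepend_start_attribute_general (n d k : ℕ)
    (H : Type*) [Ring H] [Algebra ℝ H]
    (Adj : Fin n → Fin n → Prop) [DecidableRel Adj]
    (f : Fin n → Fin d → ℝ) (φ : (Fin d → ℝ) → H)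
    (Pt : Matrix (Fin n) (Fin n) H)
    (hPt : ∀ i j, Pt i j =
      if Adj i j then ((degree n Adj i : ℝ))⁻¹ • φ (f j - f i) else 0)
    (P : Matrix (Fin n) (Fin n) ℝ)
    (hP : ∀ i j, P i j = if Adj i j then ((degree n Adj i : ℝ))⁻¹ else 0)
    (F : Matrix (Fin n) (Fin n) H)
    (hFdiag : ∀ i, F i i = φ (f i)) (hFoff : ∀ i j, i ≠ j → F i j = 0)
    (i : Fin n) :
    ((F * Pt ^ k).mulVec (fun _ => (1 : H))) i =
      ∑ w : Fin (k+1) → Fin n,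
        (if w 0 = i then ∏ q : Fin k, P (w q.castSucc) (w q.succ) else 0) •
          (φ (f i) *
            (List.ofFn fun q : Fin k =>
              φ (f (w q.succ) - f (w q.castSucc))).prod) := by
  have hF : F = diagonal fun j => φ (f j) := by
    ext a b
    rcases eq_or_ne a b with rfl | hab
    · simp [hFdiag]
    · simp [hFoff a b hab, hab]
  have hPt_smul : ∀ a b, Pt a b = P a b • φ (f b - f a) := by
    intro a b
    rw [hPt, hP]
    split_ifs <;> simp
  calc ((F * Pt ^ k) *ᵥ fun _ => (1 : H)) i = φ (f i) * (Pt ^ k *ᵥ fun _ => 1) i := by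
        rw [hF, ← mulVec_mulVec, mulVec_diagonal]
    _ = φ (f i) * ∑ w : Fin k → Fin n,
          (∏ q : Fin k, P ((Fin.cons i w : Fin (k + 1) → Fin n) q.castSucc)
            ((Fin.cons i w : Fin (k + 1) → Fin n) q.succ)) •
          (List.ofFn fun q : Fin k => φ (f ((Fin.cons i w : Fin (k + 1) → Fin n) q.succ) -
            f ((Fin.cons i w : Fin (k + 1) → Fin n) q.castSucc))).prod := by
        simp_rw [pow_mulVec_one_apply, hPt_smul, List.prod_ofFn_smul]
    _ = ∑ w : Fin (k + 1) → Fin n, if w 0 = i then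
          (∏ q : Fin k, P (w q.castSucc) (w q.succ)) •
            (φ (f i) * (List.ofFn fun q : Fin k => φ (f (w q.succ) - f (w q.castSucc))).prod)
          else 0 := by
        simp_rw [Fintype.sum_ite_apply_zero_eq_sum_cons, mul_sum, mul_smul_comm]
    _ = _ := sum_congr rfl fun w _ => by split_ifs <;> simp

/-- Prepending the starting attribute: with `F` the diagonal matrix with
`F_{i,i} = φ(f i)` and `v_k = P̃^k 𝟙_H` the solution of the hypo-elliptic diffusion,
the `i`-th component of `F·v_k` equals
`E[φ(δ₀L)·φ(δ₁L)⋯φ(δ_kL) | B₀ = i]`, where `δ₀L = f(B₀)`: the probability-weighted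
sum over trajectories started at `i` of `φ(f i)` times the ordered product of the
lifted increments. -/
theorem prepend_start_attribute (n d k : ℕ) (hk : 1 ≤ k)
    (H : Type*) [Ring H] [Algebra ℝ H]
    (Adj : Fin n → Fin n → Prop) [DecidableRel Adj] (hsymm : Symmetric Adj)
    (hdeg : ∀ i, 0 < degree n Adj i)
    (f : Fin n → Fin d → ℝ) (φ : (Fin d → ℝ) → H)
    (Pt : Matrix (Fin n) (Fin n) H)
    (hPt : ∀ i j, Pt i j =
      if Adj i j then ((degree n Adj i : ℝ))⁻¹ • φ (f j - f i) else 0)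
    (P : Matrix (Fin n) (Fin n) ℝ)
    (hP : ∀ i j, P i j = if Adj i j then ((degree n Adj i : ℝ))⁻¹ else 0)
    (F : Matrix (Fin n) (Fin n) H)
    (hFdiag : ∀ i, F i i = φ (f i)) (hFoff : ∀ i j, i ≠ j → F i j = 0)
    (i : Fin n) :
    ((F * Pt ^ k).mulVec (fun _ => (1 : H))) i =
      ∑ w : Fin (k+1) → Fin n,
        (if w 0 = i then ∏ q : Fin k, P (w q.castSucc) (w q.succ) else 0) •
          (φ (f i) *
            (List.ofFn fun q : Fin k =>
              φ (f (w q.succ) - f (w q.castSucc))).prod) :=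
  prepend_start_attribute_general n d k H Adj f φ Pt hPt P hP F hFdiag hFoff i
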